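/- arXiv:2108.03712 — 4 statements merged into one kernel-verified Lean document; each statement's English description precedes it below -/
import Mathlib

section
/- Let D₁(X), D₂(X) ∈ ℝ^{N×N_d} with D₁(X) = D₂(X)R and D₁(Y) = D₂(Y)R for an invertible matrix R ∈ ℝ^{N_d×N_d}, and suppose D₁(X) and D₂(X) have full column rank. Define K₁ = D₁(X)† D₁(Y) and K₂ = D₂(X)† D₂(Y), where † denotes the Moore–Penrose pseudoinverse. Then K₁ = R⁻¹ K₂ R. -/
open Matrix

lemma isUnit_of_rank_eq {n : ℕ} (A : Matrix (Fin n) (Fin n) ℝ) (h : A.rank = n) :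
    IsUnit A := by
  rw [← Matrix.mulVec_surjective_iff_isUnit]
  have hr : LinearMap.range A.mulVecLin = ⊤ := by
    apply Submodule.eq_top_of_finrank_eq
    rw [show Module.finrank ℝ (LinearMap.range A.mulVecLin) = A.rank from rfl, h]
    simp
  intro v
  have := LinearMap.range_eq_top.mp hr v
  simpa using this

/-- If `D₁(X) = D₂(X) R`, `D₁(Y) = D₂(Y) R` with `R` invertible and `D₂(X)` (hence `D₁(X)`)
of full column rank, then the EDMD matrices `Kᵢ = Dᵢ(X)† Dᵢ(Y)` (computed with the
full-column-rank pseudoinverse formula `A† = (AᵀA)⁻¹Aᵀ`) satisfy `K₁ = R⁻¹ K₂ R`. -/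
theorem stmt_3 (N Nd : ℕ) (D₁X D₂X D₁Y D₂Y : Matrix (Fin N) (Fin Nd) ℝ)
    (R : Matrix (Fin Nd) (Fin Nd) ℝ) (hR : IsUnit R.det)
    (h1 : D₁X = D₂X * R) (h2 : D₁Y = D₂Y * R)
    (hrank : D₂X.rank = Nd) :
    (D₁Xᵀ * D₁X)⁻¹ * D₁Xᵀ * D₁Y = R⁻¹ * ((D₂Xᵀ * D₂X)⁻¹ * D₂Xᵀ * D₂Y) * R := by
  have hG : IsUnit (D₂Xᵀ * D₂X) := by
    apply isUnit_of_rank_eq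
    rw [Matrix.rank_transpose_mul_self, hrank]
  have hGdet : IsUnit (D₂Xᵀ * D₂X).det := (Matrix.isUnit_iff_isUnit_det _).mp hG
  have hRT : IsUnit Rᵀ.det := by rwa [Matrix.det_transpose]
  subst h1 h2
  rw [Matrix.transpose_mul, show Rᵀ * D₂Xᵀ * (D₂X * R) = Rᵀ * (D₂Xᵀ * D₂X) * R by simp [Matrix.mul_assoc]]
  rw [Matrix.mul_inv_rev, Matrix.mul_inv_rev]
  calc R⁻¹ * ((D₂Xᵀ * D₂X)⁻¹ * Rᵀ⁻¹) * (Rᵀ * D₂Xᵀ) * (D₂Y * R)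
      = R⁻¹ * ((D₂Xᵀ * D₂X)⁻¹ * (Rᵀ⁻¹ * Rᵀ) * D₂Xᵀ * D₂Y) * R := by simp only [Matrix.mul_assoc]
    _ = R⁻¹ * ((D₂Xᵀ * D₂X)⁻¹ * D₂Xᵀ * D₂Y) * R := by
        rw [Matrix.nonsing_inv_mul _ hRT, Matrix.mul_one]
end

section
/- Let A, B ∈ ℝ^{m×n} have full column rank, and suppose the columns of Z = [(Z^A)ᵀ, (Z^B)ᵀ]ᵀ ∈ ℝ^{2n×l} form a basis for the null space of the concatenated matrix [A, B] ∈ ℝ^{m×2n}, where Z^A, Z^B ∈ ℝ^{n×l}. Then the range of A Z^A equals the intersection of the range of A and the range of B. -/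
open Matrix

/-!
A vector `(u, v)` lies in the null space of `[A, B]` exactly when `A u = -B v`, so the
`Z^A`-halves of null vectors are the `u` with `A u ∈ range B`; as the columns of `Z` span
that null space, `range (A Z^A)` is `A` applied to all such `u`, i.e. `range A ∩ range B`.
-/

namespace Matrix

variable {R : Type*} [CommRing R] {m n n' l : Type*} [Fintype n] [Fintype n'] [Fintype l]
  {A : Matrix m n R} {B : Matrix m n' R} {ZA : Matrix n l R} {ZB : Matrix n' l R}

theorem range_mulVecLin_mul_le_inf_of_range_fromRows_le_ker
    (h : LinearMap.range (fromRows ZA ZB).mulVecLin ≤ LinearMap.ker (fromCols A B).mulVecLin) :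
    LinearMap.range (A * ZA).mulVecLin ≤
      LinearMap.range A.mulVecLin ⊓ LinearMap.range B.mulVecLin := by
  rintro _ ⟨x, rfl⟩
  have hnull : A *ᵥ (ZA *ᵥ x) + B *ᵥ (ZB *ᵥ x) = 0 := by
    simpa [fromRows_mulVec, fromCols_mulVec_sumElim] using h ⟨x, rfl⟩
  refine ⟨⟨ZA *ᵥ x, by simp [mulVec_mulVec]⟩, ⟨-(ZB *ᵥ x), ?_⟩⟩
  simp only [mulVecLin_apply, mulVec_neg, ← mulVec_mulVec]
  exact neg_eq_of_add_eq_zero_left hnull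

theorem inf_le_range_mulVecLin_mul_of_ker_fromCols_le_range
    (h : LinearMap.ker (fromCols A B).mulVecLin ≤ LinearMap.range (fromRows ZA ZB).mulVecLin) :
    LinearMap.range A.mulVecLin ⊓ LinearMap.range B.mulVecLin ≤
      LinearMap.range (A * ZA).mulVecLin := by
  rintro y ⟨⟨u, rfl⟩, ⟨v, hv⟩⟩
  have hnull : Sum.elim u (-v) ∈ LinearMap.ker (fromCols A B).mulVecLin := by
    simp only [LinearMap.mem_ker, mulVecLin_apply, fromCols_mulVec_sumElim, mulVec_neg] at hv ⊢
    rw [hv, add_neg_cancel]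
  obtain ⟨x, hx⟩ := h hnull
  have hZA : ZA *ᵥ x = u := by
    simp only [mulVecLin_apply, fromRows_mulVec] at hx
    exact funext fun i => congrFun hx (Sum.inl i)
  exact ⟨x, by simp [hZA]⟩

end Matrix

theorem stmt_5_general (m n l : ℕ) (A B : Matrix (Fin m) (Fin n) ℝ)
    (ZA ZB : Matrix (Fin n) (Fin l) ℝ)
    (hspan : LinearMap.range (Matrix.fromRows ZA ZB).mulVecLin =
      LinearMap.ker (Matrix.fromCols A B).mulVecLin) :
    LinearMap.range (A * ZA).mulVecLin =
      LinearMap.range A.mulVecLin ⊓ LinearMap.range B.mulVecLin :=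
  le_antisymm (range_mulVecLin_mul_le_inf_of_range_fromRows_le_ker hspan.le)
    (inf_le_range_mulVecLin_mul_of_ker_fromCols_le_range hspan.ge)

/-- If `A, B ∈ ℝ^{m×n}` have full column rank and the columns of
`Z = [(Z^A)ᵀ, (Z^B)ᵀ]ᵀ` form a basis of the null space of `[A, B]`, then
`range(A Z^A) = range(A) ∩ range(B)`. -/
theorem stmt_5 (m n l : ℕ) (A B : Matrix (Fin m) (Fin n) ℝ)
    (hA : A.rank = n) (hB : B.rank = n)
    (ZA ZB : Matrix (Fin n) (Fin l) ℝ)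
    (hindep : Function.Injective (Matrix.fromRows ZA ZB).mulVecLin)
    (hspan : LinearMap.range (Matrix.fromRows ZA ZB).mulVecLin =
      LinearMap.ker (Matrix.fromCols A B).mulVecLin) :
    LinearMap.range (A * ZA).mulVecLin =
      LinearMap.range A.mulVecLin ⊓ LinearMap.range B.mulVecLin :=
  stmt_5_general m n l A B ZA ZB hspan
end

section
/- Let A, B ∈ ℝ^{m×n} have full column rank, and suppose the columns of [(Z^A)ᵀ, (Z^B)ᵀ]ᵀ form a basis for the null space of [A, B]. Then Z^A and Z^B each have full column rank. -/
/-! If `Z^A x = 0`, the null-space relation `A Z^A + B Z^B = 0` gives `B Z^B x = 0`, hence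
`Z^B x = 0` since `B` is injective, hence `x = 0` since the stacked matrix is
injective. -/

open Matrix

namespace Matrix

variable {K R m n o p : Type*}

theorem rank_eq_card_iff_mulVec_injective [Field K] [Fintype n] (A : Matrix m n K) :
    A.rank = Fintype.card n ↔ Function.Injective A.mulVec := by
  rw [rank_eq_finrank_span_cols, mulVec_injective_iff, linearIndependent_iff_card_eq_finrank_span,
    Set.finrank, eq_comm]

theorem mulVec_fromRows_injective_iff [Semiring R] [Fintype n] (Z₁ : Matrix m n R)
    (Z₂ : Matrix o n R) :
    Function.Injective (fromRows Z₁ Z₂).mulVec ↔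
      ∀ x y, Z₁ *ᵥ x = Z₁ *ᵥ y → Z₂ *ᵥ x = Z₂ *ᵥ y → x = y := by
  simp only [Function.Injective, fromRows_mulVec, Sum.elim_eq_iff, and_imp]

theorem range_mulVecLin_le_ker_iff [CommSemiring R] [Fintype n] [Fintype p] [DecidableEq p]
    (M : Matrix m n R) (N : Matrix n p R) :
    LinearMap.range N.mulVecLin ≤ LinearMap.ker M.mulVecLin ↔ M * N = 0 := by
  rw [LinearMap.range_le_ker_iff, ← mulVecLin_mul, ← toLin'_apply', LinearEquiv.map_eq_zero_iff]

theorem mulVec_injective_of_mul_add_mul_eq_zero [Ring R] [Fintype n] [Fintype o] [Fintype p]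
    {A : Matrix m n R} {B : Matrix m o R} {Z₁ : Matrix n p R} {Z₂ : Matrix o p R}
    (h : A * Z₁ + B * Z₂ = 0) (hB : Function.Injective B.mulVec)
    (hZ : ∀ x y, Z₁ *ᵥ x = Z₁ *ᵥ y → Z₂ *ᵥ x = Z₂ *ᵥ y → x = y) :
    Function.Injective Z₁.mulVec := by
  have hnull (v : p → R) : A *ᵥ (Z₁ *ᵥ v) + B *ᵥ (Z₂ *ᵥ v) = 0 := by
    rw [mulVec_mulVec, mulVec_mulVec, ← add_mulVec, h, zero_mulVec]
  intro x y hxy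
  refine hZ x y hxy (hB (add_left_cancel (a := A *ᵥ (Z₁ *ᵥ x)) ?_))
  rw [hnull x, hxy, hnull y]

end Matrix

/-- If `A, B ∈ ℝ^{m×n}` have full column rank and the columns of
`[(Z^A)ᵀ, (Z^B)ᵀ]ᵀ` form a basis of the null space of `[A, B]`, then `Z^A` and `Z^B`
each have full column rank. -/
theorem stmt_6 (m n l : ℕ) (A B : Matrix (Fin m) (Fin n) ℝ)
    (hA : A.rank = n) (hB : B.rank = n)
    (ZA ZB : Matrix (Fin n) (Fin l) ℝ)
    (hindep : Function.Injective (Matrix.fromRows ZA ZB).mulVecLin)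
    (hspan : LinearMap.range (Matrix.fromRows ZA ZB).mulVecLin =
      LinearMap.ker (Matrix.fromCols A B).mulVecLin) :
    ZA.rank = l ∧ ZB.rank = l := by
  have full_rank_iff {r k : ℕ} (M : Matrix (Fin r) (Fin k) ℝ) :
      M.rank = k ↔ Function.Injective M.mulVec := by
    rw [← rank_eq_card_iff_mulVec_injective, Fintype.card_fin]
  have hZ := (mulVec_fromRows_injective_iff ZA ZB).1 hindep
  have hnull : A * ZA + B * ZB = 0 := by
    rw [← fromCols_mul_fromRows, ← range_mulVecLin_le_ker_iff, hspan]
  refine ⟨(full_rank_iff ZA).2 ?_, (full_rank_iff ZB).2 ?_⟩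
  · exact mulVec_injective_of_mul_add_mul_eq_zero hnull ((full_rank_iff B).1 hB) hZ
  · exact mulVec_injective_of_mul_add_mul_eq_zero ((add_comm _ _).trans hnull)
      ((full_rank_iff A).1 hA) fun x y h₁ h₂ => hZ x y h₂ h₁
end

section
/- Let X̃, Ỹ ∈ ℝ^{N×k} be matrices such that range(X̃) and range(Ỹ) are ε-apart for some ε ∈ [0,1], and let K = X̃† Ỹ. Then for every w ∈ ℝ^k, ‖(Ỹ − X̃ K) w‖₂ ≤ ε ‖Ỹ w‖₂. -/
open Matrix

/-!
For the Moore–Penrose pseudoinverse `X̃†`, the matrix `X̃ X̃†` is the orthogonal projection onto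
`range X̃`: it maps into `range X̃`, and the first and third Penrose conditions make the residual
`v - X̃ X̃† v` orthogonal to `range X̃`. Hence `(Ỹ - X̃ K) w = v - P_{range X̃} v` with `v = Ỹ w`,
while `P_{range Ỹ} v = v` because `v ∈ range Ỹ`; so the bound is `ε`-apartness applied to `v`.
-/

namespace Matrix

variable {m n : Type*} [Fintype m] [Fintype n]

abbrev euclideanRange (A : Matrix m n ℝ) : Submodule ℝ (EuclideanSpace ℝ m) :=
  (LinearMap.range A.mulVecLin).map (WithLp.linearEquiv 2 ℝ (m → ℝ)).symm.toLinearMap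

theorem transpose_mul_mul_eq_transpose {A : Matrix m n ℝ} {B : Matrix n m ℝ}
    (h₁ : A * B * A = A) (h₃ : (A * B)ᵀ = A * B) : Aᵀ * (A * B) = Aᵀ := by
  rw [← h₃, ← transpose_mul, h₁]

theorem starProjection_euclideanRange {A : Matrix m n ℝ} {B : Matrix n m ℝ}
    (h₁ : A * B * A = A) (h₃ : (A * B)ᵀ = A * B) (x : m → ℝ) :
    A.euclideanRange.starProjection (WithLp.toLp 2 x) = WithLp.toLp 2 ((A * B) *ᵥ x) := by
  refine Submodule.eq_starProjection_of_mem_of_inner_eq_zero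
    ⟨(A * B) *ᵥ x, ⟨B *ᵥ x, by simp [mulVec_mulVec]⟩, rfl⟩ ?_
  rintro _ ⟨_, ⟨c, rfl⟩, rfl⟩
  have hres : Aᵀ *ᵥ (x - (A * B) *ᵥ x) = 0 := by
    rw [mulVec_sub, mulVec_mulVec, transpose_mul_mul_eq_transpose h₁ h₃, sub_self]
  calc inner ℝ (WithLp.toLp 2 (x - (A * B) *ᵥ x)) (WithLp.toLp 2 (A *ᵥ c))
      = (Aᵀ *ᵥ (x - (A * B) *ᵥ x)) ⬝ᵥ c := by
        rw [EuclideanSpace.inner_toLp_toLp, star_trivial, dotProduct_comm, dotProduct_mulVec,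
          mulVec_transpose]
    _ = 0 := by rw [hres, zero_dotProduct]

end Matrix

theorem stmt_14_general (N k : ℕ) (Xt Yt : Matrix (Fin N) (Fin k) ℝ)
    (Xdag : Matrix (Fin k) (Fin N) ℝ)
    (hp1 : Xt * Xdag * Xt = Xt)
    (hp3 : (Xt * Xdag)ᵀ = Xt * Xdag)
    (ε : ℝ)
    (S₁ S₂ : Submodule ℝ (EuclideanSpace ℝ (Fin N)))
    (hS₁ : S₁ = (LinearMap.range Xt.mulVecLin).map
      (WithLp.linearEquiv 2 ℝ (Fin N → ℝ)).symm.toLinearMap)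
    (hS₂ : S₂ = (LinearMap.range Yt.mulVecLin).map
      (WithLp.linearEquiv 2 ℝ (Fin N → ℝ)).symm.toLinearMap)
    (hapart : ∀ v ∈ (S₁ : Set (EuclideanSpace ℝ (Fin N))) ∪
        (S₂ : Set (EuclideanSpace ℝ (Fin N))),
      ‖(Submodule.orthogonalProjectionOnto S₁ v : EuclideanSpace ℝ (Fin N)) -
        (Submodule.orthogonalProjectionOnto S₂ v : EuclideanSpace ℝ (Fin N))‖ ≤ ε * ‖v‖) :
    ∀ w : Fin k → ℝ,
      ‖(WithLp.linearEquiv 2 ℝ (Fin N → ℝ)).symm ((Yt - Xt * (Xdag * Yt)).mulVec w)‖ ≤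
        ε * ‖(WithLp.linearEquiv 2 ℝ (Fin N → ℝ)).symm (Yt.mulVec w)‖ := by
  intro w
  subst hS₁ hS₂
  have hv : WithLp.toLp 2 (Yt *ᵥ w) ∈ Yt.euclideanRange := ⟨Yt *ᵥ w, ⟨w, rfl⟩, rfl⟩
  have key := hapart _ (Or.inr hv)
  simp only [← Submodule.starProjection_apply,
    Submodule.starProjection_eq_self_iff.mpr hv, starProjection_euclideanRange hp1 hp3] at key
  rw [← norm_neg, neg_sub, ← WithLp.toLp_sub] at key
  rwa [← Matrix.mul_assoc, sub_mulVec, ← mulVec_mulVec]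

/-- If `range(X̃)` and `range(Ỹ)` (viewed as subspaces of Euclidean space `ℝ^N`) are
`ε`-apart for some `ε ∈ [0,1]`, and `K = X̃† Ỹ` where `X̃†` is the Moore–Penrose
pseudoinverse of `X̃` (characterized by the four Penrose conditions), then
`‖(Ỹ − X̃ K) w‖₂ ≤ ε ‖Ỹ w‖₂` for every `w ∈ ℝ^k`. -/
theorem stmt_14 (N k : ℕ) (Xt Yt : Matrix (Fin N) (Fin k) ℝ)
    (Xdag : Matrix (Fin k) (Fin N) ℝ)
    (hp1 : Xt * Xdag * Xt = Xt) (hp2 : Xdag * Xt * Xdag = Xdag)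
    (hp3 : (Xt * Xdag)ᵀ = Xt * Xdag) (hp4 : (Xdag * Xt)ᵀ = Xdag * Xt)
    (ε : ℝ) (hε0 : 0 ≤ ε) (hε1 : ε ≤ 1)
    (S₁ S₂ : Submodule ℝ (EuclideanSpace ℝ (Fin N)))
    (hS₁ : S₁ = (LinearMap.range Xt.mulVecLin).map
      (WithLp.linearEquiv 2 ℝ (Fin N → ℝ)).symm.toLinearMap)
    (hS₂ : S₂ = (LinearMap.range Yt.mulVecLin).map
      (WithLp.linearEquiv 2 ℝ (Fin N → ℝ)).symm.toLinearMap)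
    (hapart : ∀ v ∈ (S₁ : Set (EuclideanSpace ℝ (Fin N))) ∪
        (S₂ : Set (EuclideanSpace ℝ (Fin N))),
      ‖(Submodule.orthogonalProjectionOnto S₁ v : EuclideanSpace ℝ (Fin N)) -
        (Submodule.orthogonalProjectionOnto S₂ v : EuclideanSpace ℝ (Fin N))‖ ≤ ε * ‖v‖) :
    ∀ w : Fin k → ℝ,
      ‖(WithLp.linearEquiv 2 ℝ (Fin N → ℝ)).symm ((Yt - Xt * (Xdag * Yt)).mulVec w)‖ ≤
        ε * ‖(WithLp.linearEquiv 2 ℝ (Fin N → ℝ)).symm (Yt.mulVec w)‖ :=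
  stmt_14_general N k Xt Yt Xdag hp1 hp3 ε S₁ S₂ hS₁ hS₂ hapart
end
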